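/- For real symmetric d×d matrices X and Z, |tr(XZ)| ≤ √d · ‖X∘Z‖_F, where X∘Z := (XZ+ZX)/2. In particular, if a sequence satisfies X_k∘Z_k → 0 in Frobenius norm, then tr(X_k Z_k) → 0; hence the CAKKT complementarity condition implies the TAKKT complementarity condition. -/

import Mathlib

open Matrix BigOperators Filter

/-- Frobenius norm of a real matrix. -/
noncomputable def frobNorm {d : ℕ} (A : Matrix (Fin d) (Fin d) ℝ) : ℝ :=
  Real.sqrt (Matrix.trace (Aᵀ * A))

/-- Eigenvalues of a Hermitian (real symmetric) matrix, sorted in ascending order. -/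
noncomputable def sortedEig {d : ℕ} {A : Matrix (Fin d) (Fin d) ℝ} (hA : A.IsHermitian) :
    Fin d → ℝ :=
  hA.eigenvalues ∘ Tuple.sort hA.eigenvalues

/-- Projection of a symmetric matrix onto the PSD cone: zero out negative eigenvalues in
a spectral decomposition. -/
noncomputable def psdProj {d : ℕ} {A : Matrix (Fin d) (Fin d) ℝ} (hA : A.IsHermitian) :
    Matrix (Fin d) (Fin d) ℝ :=
  (hA.eigenvectorUnitary : Matrix (Fin d) (Fin d) ℝ) *
    Matrix.diagonal (fun i => max (hA.eigenvalues i) 0) *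
    star (hA.eigenvectorUnitary : Matrix (Fin d) (Fin d) ℝ)

namespace Matrix

variable {n : Type*} [Fintype n]

theorem trace_transpose_mul_self_eq_sum_sq (M : Matrix n n ℝ) :
    trace (Mᵀ * M) = ∑ i, ∑ j, M j i ^ 2 := by
  simp [trace, mul_apply, sq]

theorem sum_diag_sq_le_trace_transpose_mul_self (M : Matrix n n ℝ) :
    ∑ i, M i i ^ 2 ≤ trace (Mᵀ * M) := by
  rw [trace_transpose_mul_self_eq_sum_sq]
  exact Finset.sum_le_sum fun i _ =>
    Finset.single_le_sum (f := fun j => M j i ^ 2) (fun j _ => sq_nonneg _) (Finset.mem_univ i)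

theorem trace_sq_le_card_mul_trace_transpose_mul_self (M : Matrix n n ℝ) :
    trace M ^ 2 ≤ Fintype.card n * trace (Mᵀ * M) :=
  calc trace M ^ 2 = (∑ i, M i i) ^ 2 := rfl
    _ ≤ Fintype.card n * ∑ i, M i i ^ 2 := sq_sum_le_card_mul_sum_sq
    _ ≤ Fintype.card n * trace (Mᵀ * M) :=
      mul_le_mul_of_nonneg_left (sum_diag_sq_le_trace_transpose_mul_self M) (Nat.cast_nonneg _)

theorem trace_mul_eq_trace_jordan (X Z : Matrix n n ℝ) :
    trace (X * Z) = trace ((1 / 2 : ℝ) • (X * Z + Z * X)) := by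
  rw [trace_smul, trace_add, trace_mul_comm Z X, smul_eq_mul]
  ring

end Matrix

theorem abs_trace_le_sqrt_mul_frobNorm {d : ℕ} (M : Matrix (Fin d) (Fin d) ℝ) :
    |trace M| ≤ Real.sqrt d * frobNorm M := by
  rw [← Real.sqrt_sq_eq_abs, frobNorm, ← Real.sqrt_mul (Nat.cast_nonneg d)]
  apply Real.sqrt_le_sqrt
  simpa using trace_sq_le_card_mul_trace_transpose_mul_self M

theorem abs_trace_mul_le_sqrt_mul_frobNorm_jordan {d : ℕ} (X Z : Matrix (Fin d) (Fin d) ℝ) :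
    |trace (X * Z)| ≤ Real.sqrt d * frobNorm ((1 / 2 : ℝ) • (X * Z + Z * X)) := by
  rw [trace_mul_eq_trace_jordan]
  exact abs_trace_le_sqrt_mul_frobNorm _

/-- `|tr(XZ)| ≤ √d ‖X∘Z‖_F`, and hence `X_k∘Z_k → 0` implies `tr(X_k Z_k) → 0`. -/
theorem stmt4 {d : ℕ} :
    (∀ X Z : Matrix (Fin d) (Fin d) ℝ, Xᵀ = X → Zᵀ = Z →
      |Matrix.trace (X * Z)| ≤ Real.sqrt d * frobNorm ((1 / 2 : ℝ) • (X * Z + Z * X))) ∧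
    (∀ Xs Zs : ℕ → Matrix (Fin d) (Fin d) ℝ,
      (∀ k, (Xs k)ᵀ = Xs k) → (∀ k, (Zs k)ᵀ = Zs k) →
      Filter.Tendsto (fun k => frobNorm ((1 / 2 : ℝ) • (Xs k * Zs k + Zs k * Xs k)))
        Filter.atTop (nhds 0) →
      Filter.Tendsto (fun k => Matrix.trace (Xs k * Zs k)) Filter.atTop (nhds 0)) := by
  refine ⟨fun X Z _ _ => abs_trace_mul_le_sqrt_mul_frobNorm_jordan X Z,
    fun Xs Zs _ _ hjordan => ?_⟩
  have hbound := hjordan.const_mul (Real.sqrt d)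
  rw [mul_zero] at hbound
  exact squeeze_zero_norm
    (fun k => abs_trace_mul_le_sqrt_mul_frobNorm_jordan (Xs k) (Zs k)) hbound
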